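/- Let Ω = (−1,1) and for t ∈ [1/2, 1] define u_t : [−1,1] → ℝ by u_t(x) = |x+t| − t for x ∈ [−1,−1/2], u_t(x) = x for x ∈ (−1/2, 1/2), and u_t(x) = t − |x−t| for x ∈ [1/2, 1]. Then each u_t is 1-Lipschitz on [−1,1], satisfies max u_t + min u_t = 0, and is a viscosity solution of min{|u'| − 1, −u''(u')²} = 0 on (0,1) and max{1 − |u'|, −u''(u')²} = 0 on (−1,0). In particular the limiting PDE admits infinitely many solutions. -/

import Mathlib

/-!
Near a point of `(0, 1)` the function `u_t` is the tent `t - |x - t|`, near a point of `(-1, 0)`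
the vee `|x + t| - t`. Off its vertex a tent or vee is affine with slope `±1`, so a test function
touching it has the same slope and a second derivative of the appropriate sign; at the vertex of
a tent no differentiable function touches from below (its one-sided slopes would have to be `≥ 1`
and `≤ -1`), and symmetrically for a vee from above. The remaining two inequalities only need
`|φ'| ≤ 1`, which holds because `u_t = min (max x (-2t - x)) (2t - x)` is `1`-Lipschitz.
-/

open Set

/-- The family of solutions of the limiting PDE on `(-1,1)`. -/
noncomputable def uT (t x : ℝ) : ℝ :=
  if x ≤ -(1/2) then |x + t| - t else if x < 1/2 then x else t - |x - t|

open Filter Topology NNReal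

section TestFunctions

variable {f u φ : ℝ → ℝ} {x₀ a b c s : ℝ} {K : ℝ≥0}

theorem IsLocalMin.deriv_deriv_nonneg (h : IsLocalMin f x₀) (hc : ContinuousAt f x₀) :
    0 ≤ deriv (deriv f) x₀ := by
  by_contra! hneg
  have hmax := isLocalMax_of_deriv_deriv_neg hneg h.deriv_eq_zero hc
  have hconst : f =ᶠ[𝓝 x₀] fun _ => f x₀ := by
    filter_upwards [h, hmax] with x hx₁ hx₂ using le_antisymm hx₂ hx₁
  rw [hconst.deriv.deriv_eq, deriv_const', deriv_const] at hneg
  exact hneg.false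

theorem abs_deriv_le_of_eventually_neg_mul_abs_le (hf : DifferentiableAt ℝ f x₀)
    (h : ∀ᶠ x in 𝓝 x₀, -(c * |x - x₀|) ≤ f x - f x₀) : |deriv f x₀| ≤ c := by
  have hslope : Tendsto (slope f x₀) (𝓝[≠] x₀) (𝓝 (deriv f x₀)) :=
    hasDerivAt_iff_tendsto_slope.mp hf.hasDerivAt
  rw [abs_le]
  constructor
  · refine ge_of_tendsto (hslope.mono_left (nhdsGT_le_nhdsNE x₀)) ?_
    filter_upwards [nhdsWithin_le_nhds h, self_mem_nhdsWithin] with x hx (hx₀ : x₀ < x)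
    rw [abs_of_pos (sub_pos.2 hx₀)] at hx
    rw [slope_def_field, le_div_iff₀ (sub_pos.2 hx₀)]
    linarith
  · refine le_of_tendsto (hslope.mono_left (nhdsLT_le_nhdsNE x₀)) ?_
    filter_upwards [nhdsWithin_le_nhds h, self_mem_nhdsWithin] with x hx (hx₀ : x < x₀)
    rw [abs_of_neg (sub_neg.2 hx₀)] at hx
    rw [slope_def_field, div_le_iff_of_neg (sub_neg.2 hx₀)]
    linarith

theorem abs_deriv_le_of_eventually_le_mul_abs (hf : DifferentiableAt ℝ f x₀)
    (h : ∀ᶠ x in 𝓝 x₀, f x - f x₀ ≤ c * |x - x₀|) : |deriv f x₀| ≤ c := by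
  rw [← abs_neg, ← deriv.fun_neg]
  refine abs_deriv_le_of_eventually_neg_mul_abs_le hf.neg ?_
  filter_upwards [h] with x hx
  linarith

theorem IsLocalMax.abs_deriv_le_of_lipschitzWith (h : IsLocalMax (fun x => u x - φ x) x₀)
    (hu : LipschitzWith K u) (hφ : DifferentiableAt ℝ φ x₀) : |deriv φ x₀| ≤ K := by
  refine abs_deriv_le_of_eventually_neg_mul_abs_le hφ ?_
  filter_upwards [h] with x hx
  have hux := (abs_le.1 (hu.dist_le_mul x x₀)).1
  rw [Real.dist_eq] at hux
  linarith

theorem IsLocalMin.abs_deriv_le_of_lipschitzWith (h : IsLocalMin (fun x => u x - φ x) x₀)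
    (hu : LipschitzWith K u) (hφ : DifferentiableAt ℝ φ x₀) : |deriv φ x₀| ≤ K := by
  refine abs_deriv_le_of_eventually_le_mul_abs hφ ?_
  filter_upwards [h] with x hx
  have hux := (abs_le.1 (hu.dist_le_mul x x₀)).2
  rw [Real.dist_eq] at hux
  linarith

theorem IsLocalMin.deriv_eq_and_deriv_deriv_nonpos_of_eventuallyEq_affine
    (h : IsLocalMin (fun x => u x - φ x) x₀) (hu : u =ᶠ[𝓝 x₀] fun x => s * x + b)
    (hφ : Differentiable ℝ φ) :
    deriv φ x₀ = s ∧ deriv (deriv φ) x₀ ≤ 0 := by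
  have hmin : IsLocalMin (fun x => s * x + b - φ x) x₀ :=
    h.congr (by filter_upwards [hu] with x hx; rw [hx])
  have hderiv : deriv (fun x => s * x + b - φ x) = fun x => s - deriv φ x := by
    ext x
    simpa only [mul_one] using
      ((((hasDerivAt_id' x).const_mul s).add_const b).fun_sub (hφ x).hasDerivAt).deriv
  have hslope := hmin.deriv_eq_zero
  have hcurv := hmin.deriv_deriv_nonneg (by have := hφ.continuous; fun_prop)
  rw [hderiv] at hslope hcurv
  rw [deriv_const_sub] at hcurv
  constructor <;> linarith

theorem not_isLocalMin_tent_sub_at_vertex (hφ : DifferentiableAt ℝ φ a) :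
    ¬ IsLocalMin (fun x => c - |x - a| - φ x) a := by
  intro h
  have hcorner := abs_deriv_le_of_eventually_le_mul_abs (c := -1) hφ (by
    filter_upwards [h] with x hx
    simp only [sub_self, abs_zero, sub_zero] at hx
    linarith)
  linarith [abs_nonneg (deriv φ a)]

/-- The tent `c - |x - a|` is a viscosity supersolution of `min (|u'| - 1) (-u'' u'²) = 0`. -/
theorem IsLocalMin.abs_deriv_eq_one_of_tent_sub
    (h : IsLocalMin (fun x => c - |x - a| - φ x) x₀)
    (hφ : Differentiable ℝ φ) : |deriv φ x₀| = 1 ∧ deriv (deriv φ) x₀ ≤ 0 := by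
  rcases lt_trichotomy x₀ a with hlt | rfl | hgt
  · have hu : (fun x => c - |x - a|) =ᶠ[𝓝 x₀] fun x => 1 * x + (c - a) := by
      filter_upwards [Iio_mem_nhds hlt] with x (hx : x < a)
      rw [abs_of_neg (sub_neg.2 hx)]
      ring
    obtain ⟨hslope, hcurv⟩ := h.deriv_eq_and_deriv_deriv_nonpos_of_eventuallyEq_affine hu hφ
    exact ⟨by rw [hslope, abs_one], hcurv⟩
  · exact absurd h (not_isLocalMin_tent_sub_at_vertex (hφ x₀))
  · have hu : (fun x => c - |x - a|) =ᶠ[𝓝 x₀] fun x => -1 * x + (c + a) := by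
      filter_upwards [Ioi_mem_nhds hgt] with x (hx : a < x)
      rw [abs_of_pos (sub_pos.2 hx)]
      ring
    obtain ⟨hslope, hcurv⟩ := h.deriv_eq_and_deriv_deriv_nonpos_of_eventuallyEq_affine hu hφ
    exact ⟨by rw [hslope, abs_neg, abs_one], hcurv⟩

/-- The vee `|x - a| - c` is a viscosity subsolution of `max (1 - |u'|) (-u'' u'²) = 0`. -/
theorem IsLocalMax.abs_deriv_eq_one_of_vee_sub
    (h : IsLocalMax (fun x => |x - a| - c - φ x) x₀)
    (hφ : Differentiable ℝ φ) : |deriv φ x₀| = 1 ∧ 0 ≤ deriv (deriv φ) x₀ := by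
  have h' : IsLocalMin (fun x => c - |x - a| - -φ x) x₀ :=
    h.neg.congr (.of_forall fun x => by ring)
  obtain ⟨hslope, hcurv⟩ := h'.abs_deriv_eq_one_of_tent_sub hφ.neg
  rw [deriv.fun_neg', deriv.fun_neg] at hcurv
  rw [deriv.fun_neg, abs_neg] at hslope
  exact ⟨hslope, neg_nonpos.1 hcurv⟩

end TestFunctions

section uT

variable {t : ℝ}

theorem uT_eq_min_max (ht : 1/2 ≤ t) (x : ℝ) :
    uT t x = min (max x (-2 * t - x)) (2 * t - x) := by
  unfold uT
  split_ifs with hleft hmid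
  · rcases abs_cases (x + t) with ⟨habs, hsgn⟩ | ⟨habs, hsgn⟩
    · rw [habs, max_eq_left (by linarith), min_eq_left (by linarith)]; ring
    · rw [habs, max_eq_right (by linarith), min_eq_left (by linarith)]; ring
  · rw [max_eq_left (by linarith), min_eq_left (by linarith)]
  · rcases abs_cases (x - t) with ⟨habs, hsgn⟩ | ⟨habs, hsgn⟩
    · rw [habs, max_eq_left (by linarith), min_eq_right (by linarith)]; ring
    · rw [habs, max_eq_left (by linarith), min_eq_left (by linarith)]; ring

theorem lipschitzWith_uT (ht : 1/2 ≤ t) : LipschitzWith 1 (uT t) := by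
  have hrefl (c : ℝ) : LipschitzWith 1 fun x : ℝ => c - x :=
    (IsometryEquiv.subLeft c).isometry.lipschitz
  rw [show uT t = _ from funext (uT_eq_min_max ht)]
  simpa only [max_self, id] using (LipschitzWith.id.max (hrefl (-2 * t))).min (hrefl (2 * t))

theorem uT_eq_tent (ht : 1/2 ≤ t) {x : ℝ} (hx : -t ≤ x) : uT t x = t - |x - t| := by
  rw [uT_eq_min_max ht, max_eq_left (by linarith)]
  rcases abs_cases (x - t) with ⟨habs, hsgn⟩ | ⟨habs, hsgn⟩
  · rw [habs, min_eq_right (by linarith)]; ring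
  · rw [habs, min_eq_left (by linarith)]; ring

theorem uT_eq_vee (ht : 1/2 ≤ t) {x : ℝ} (hx : x ≤ t) : uT t x = |x - -t| - t := by
  rw [uT_eq_min_max ht, min_eq_left (max_le (by linarith) (by linarith)), sub_neg_eq_add]
  rcases abs_cases (x + t) with ⟨habs, hsgn⟩ | ⟨habs, hsgn⟩
  · rw [habs, max_eq_left (by linarith)]; ring
  · rw [habs, max_eq_right (by linarith)]; ring

theorem isGreatest_image_uT (ht : t ∈ Icc (1/2 : ℝ) 1) :
    IsGreatest (uT t '' Icc (-1) 1) t := by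
  obtain ⟨ht₁, ht₂⟩ := ht
  refine ⟨⟨t, ⟨by linarith, ht₂⟩, ?_⟩, ?_⟩
  · simp [uT_eq_tent ht₁ (by linarith : -t ≤ t)]
  rintro _ ⟨x, ⟨hx₁, -⟩, rfl⟩
  rw [uT_eq_min_max ht₁]
  rcases le_total x t with h | h
  · exact (min_le_left _ _).trans (max_le h (by linarith))
  · exact (min_le_right _ _).trans (by linarith)

theorem isLeast_image_uT (ht : t ∈ Icc (1/2 : ℝ) 1) :
    IsLeast (uT t '' Icc (-1) 1) (-t) := by
  obtain ⟨ht₁, ht₂⟩ := ht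
  refine ⟨⟨-t, ⟨by linarith, by linarith⟩, ?_⟩, ?_⟩
  · simp [uT_eq_vee ht₁ (by linarith : -t ≤ t)]
  rintro _ ⟨x, ⟨-, hx₂⟩, rfl⟩
  rw [uT_eq_min_max ht₁]
  refine le_min ?_ (by linarith)
  rcases le_total x (-t) with h | h
  · exact le_max_of_le_right (by linarith)
  · exact le_max_of_le_left h

end uT

theorem stmt14 (t : ℝ) (ht : t ∈ Set.Icc (1/2 : ℝ) 1) :
    LipschitzOnWith 1 (uT t) (Set.Icc (-1) 1) ∧
    sSup (uT t '' Set.Icc (-1) 1) + sInf (uT t '' Set.Icc (-1) 1) = 0 ∧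
    (∀ x₀ ∈ Set.Ioo (0:ℝ) 1, ∀ φ : ℝ → ℝ, ContDiff ℝ 2 φ →
      (IsLocalMax (fun x => uT t x - φ x) x₀ →
        min (|deriv φ x₀| - 1) (-(deriv (deriv φ) x₀ * deriv φ x₀ ^ 2)) ≤ 0) ∧
      (IsLocalMin (fun x => uT t x - φ x) x₀ →
        0 ≤ min (|deriv φ x₀| - 1) (-(deriv (deriv φ) x₀ * deriv φ x₀ ^ 2)))) ∧
    (∀ x₀ ∈ Set.Ioo (-1:ℝ) 0, ∀ φ : ℝ → ℝ, ContDiff ℝ 2 φ →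
      (IsLocalMax (fun x => uT t x - φ x) x₀ →
        max (1 - |deriv φ x₀|) (-(deriv (deriv φ) x₀ * deriv φ x₀ ^ 2)) ≤ 0) ∧
      (IsLocalMin (fun x => uT t x - φ x) x₀ →
        0 ≤ max (1 - |deriv φ x₀|) (-(deriv (deriv φ) x₀ * deriv φ x₀ ^ 2)))) := by
  have hlip := lipschitzWith_uT ht.1
  have hsq {p : ℝ} (hp : |p| = 1) : p ^ 2 = 1 := by rw [← sq_abs, hp, one_pow]
  refine ⟨hlip.lipschitzOnWith, ?_, fun x₀ hx₀ φ hφ => ?_, fun x₀ hx₀ φ hφ => ?_⟩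
  · rw [(isGreatest_image_uT ht).csSup_eq, (isLeast_image_uT ht).csInf_eq, add_neg_cancel]
  all_goals
    have hφ₁ : Differentiable ℝ φ := hφ.differentiable two_ne_zero
    refine ⟨fun hmax => ?_, fun hmin => ?_⟩
  · have := hmax.abs_deriv_le_of_lipschitzWith hlip (hφ₁ x₀)
    exact (min_le_left _ _).trans (by simpa using this)
  · have htent : (fun x => uT t x - φ x) =ᶠ[𝓝 x₀] fun x => t - |x - t| - φ x := by
      filter_upwards [Ioi_mem_nhds (by linarith [ht.1, hx₀.1] : -t < x₀)] with x (hx : -t < x)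
      rw [uT_eq_tent ht.1 hx.le]
    obtain ⟨hslope, hcurv⟩ := (hmin.congr htent).abs_deriv_eq_one_of_tent_sub hφ₁
    rw [hslope, hsq hslope]
    exact le_min (by norm_num) (by linarith)
  · have hvee : (fun x => uT t x - φ x) =ᶠ[𝓝 x₀] fun x => |x - -t| - t - φ x := by
      filter_upwards [Iio_mem_nhds (by linarith [ht.1, hx₀.2] : x₀ < t)] with x (hx : x < t)
      rw [uT_eq_vee ht.1 hx.le]
    obtain ⟨hslope, hcurv⟩ := (hmax.congr hvee).abs_deriv_eq_one_of_vee_sub hφ₁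
    rw [hslope, hsq hslope]
    exact max_le (by norm_num) (by linarith)
  · have := hmin.abs_deriv_le_of_lipschitzWith hlip (hφ₁ x₀)
    exact (le_max_left _ _).trans' (by simpa using this)
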